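/- arXiv:1607.03423 — 5 statements merged into one kernel-verified Lean document; each statement's English description precedes it below -/
import Mathlib

section
/- Let R be a commutative noetherian ring and S an R-algebra (not necessarily commutative; the image of R is central in S) that is finitely generated as an R-module. Let 0 → A →ι B →π C → 0 be a short exact sequence of finitely generated left S-modules (ι injective, π surjective, ker π = im ι), and let J be an ideal of R such that J^k • A = 0 for some k ≥ 0. Then there exists n such that the induced sequence 0 → A → B/(Jⁿ • B) → C/(Jⁿ • C) → 0, where the first map is ι followed by the quotient projection and the second map is induced by π, is exact; moreover Jⁿ annihilates both B/(Jⁿ • B) and C/(Jⁿ • C), so their supports over R are contained in the zero locus of J. -/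
/-!
By Artin–Rees, `Jⁿ B ∩ ι(A) ⊆ J^{n-k₀} ι(A)` for large `n`, and the right-hand side vanishes once
`n - k₀ ≥ k` because `J^k` kills `A`; hence `ι(A)` meets `Jⁿ B` trivially. An exact sequence
`A → B → C` with `B → C` surjective stays exact after dividing `B` by `Jⁿ B` and `C` by its image
`Jⁿ C`, and `ι(A) ∩ Jⁿ B = 0` is exactly what keeps `A → B/JⁿB` injective.
-/

open Function LinearMap Submodule

theorem Ideal.exists_pow_smul_top_inf_eq_bot {R M : Type*} [CommRing R] [IsNoetherianRing R]
    [AddCommGroup M] [Module R M] [Module.Finite R M] (I : Ideal R) {N : Submodule R M} {k : ℕ}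
    (hN : I ^ k • N = ⊥) : ∃ n, I ^ n • (⊤ : Submodule R M) ⊓ N = ⊥ := by
  obtain ⟨k₀, hAR⟩ := I.exists_pow_inf_eq_pow_smul N
  refine ⟨k₀ + k, eq_bot_iff.mpr ?_⟩
  rw [hAR _ (Nat.le_add_right _ _), Nat.add_sub_cancel_left, ← hN]
  exact smul_mono_right _ inf_le_right

section Quotient

variable {R M N P : Type*} [Ring R] [AddCommGroup M] [AddCommGroup N] [AddCommGroup P]
  [Module R M] [Module R N] [Module R P] {f : M →ₗ[R] N} {g : N →ₗ[R] P}

theorem Submodule.injective_mkQ_comp_of_disjoint (hf : Injective f) {q : Submodule R N}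
    (hq : Disjoint (range f) q) : Injective (q.mkQ ∘ₗ f) := by
  rw [← ker_eq_bot, ker_comp, ker_mkQ, eq_bot_iff]
  intro x hx
  have hfx : f x = 0 := (disjoint_def.mp hq) _ (mem_range_self f x) hx
  exact (mem_bot R).mpr (hf (hfx.trans (map_zero f).symm))

theorem Submodule.mapQ_surjective_of_surjective (hg : Surjective g) {q : Submodule R N}
    {r : Submodule R P} (hqr : q ≤ r.comap g) : Surjective (q.mapQ r g hqr) :=
  Surjective.of_comp (g := q.mkQ) <| by
    rw [← coe_comp, mapQ_mkQ]
    exact (mkQ_surjective r).comp hg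

theorem Function.Exact.exact_mkQ_comp_mapQ_iff (hfg : Exact f g) {q : Submodule R N}
    {r : Submodule R P} (hqr : q ≤ r.comap g) :
    Exact (q.mkQ ∘ₗ f) (q.mapQ r g hqr) ↔ range g ⊓ r ≤ q.map g := by
  rw [← mapQ_mkQ ⊥ q f (h := bot_le), (mkQ_surjective ⊥).comp_exact_iff_exact,
    hfg.exact_mapQ_iff]

end Quotient

theorem Submodule.map_ideal_smul_top_of_surjective {R M P : Type*} [CommSemiring R]
    [AddCommMonoid M] [AddCommMonoid P] [Module R M] [Module R P] {g : M →ₗ[R] P}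
    (hg : Surjective g) (I : Ideal R) :
    (I • ⊤ : Submodule R M).map g = I • ⊤ := by
  rw [map_smul'', map_top, range_eq_top.mpr hg]

theorem exists_pow_smul_quotient_short_exact_general
    {R S A B C : Type*} [CommRing R] [IsNoetherianRing R] [Ring S] [Algebra R S]
    [Module.Finite R S]
    [AddCommGroup A] [Module S A] [Module R A] [IsScalarTower R S A]
    [AddCommGroup B] [Module S B] [Module R B] [IsScalarTower R S B] [Module.Finite S B]
    [AddCommGroup C] [Module S C] [Module R C] [IsScalarTower R S C]
    (ι : A →ₗ[S] B) (π : B →ₗ[S] C)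
    (hι : Function.Injective ι) (hπ : Function.Surjective π)
    (hex : LinearMap.ker π = LinearMap.range ι)
    (J : Ideal R) (hJ : ∃ k : ℕ, J ^ k • (⊤ : Submodule R A) = ⊥) :
    ∃ n : ℕ, ∃ hle : J ^ n • (⊤ : Submodule R B) ≤
        (J ^ n • (⊤ : Submodule R C)).comap (π.restrictScalars R),
      Function.Injective
          ((J ^ n • (⊤ : Submodule R B)).mkQ.comp (ι.restrictScalars R)) ∧
        LinearMap.range ((J ^ n • (⊤ : Submodule R B)).mkQ.comp (ι.restrictScalars R)) =
          LinearMap.ker (Submodule.mapQ (J ^ n • (⊤ : Submodule R B))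
            (J ^ n • (⊤ : Submodule R C)) (π.restrictScalars R) hle) ∧
        Function.Surjective (Submodule.mapQ (J ^ n • (⊤ : Submodule R B))
          (J ^ n • (⊤ : Submodule R C)) (π.restrictScalars R) hle) ∧
        (∀ j ∈ J ^ n, ∀ x : B ⧸ J ^ n • (⊤ : Submodule R B), j • x = 0) ∧
        (∀ j ∈ J ^ n, ∀ x : C ⧸ J ^ n • (⊤ : Submodule R C), j • x = 0) := by
  obtain ⟨k, hk⟩ := hJ
  have : Module.Finite R B := Module.Finite.trans S B
  have hιA : J ^ k • range (ι.restrictScalars R) = ⊥ := by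
    rw [range_eq_map, ← map_smul'', hk, Submodule.map_bot]
  obtain ⟨n, hn⟩ := J.exists_pow_smul_top_inf_eq_bot hιA
  have hle := smul_top_le_comap_smul_top (J ^ n) (π.restrictScalars R)
  have hexact : Exact ((J ^ n • ⊤ : Submodule R B).mkQ ∘ₗ ι.restrictScalars R) (mapQ _ _ _ hle) :=
    ((LinearMap.exact_iff.mpr hex : Exact ι π).exact_mkQ_comp_mapQ_iff
      (f := ι.restrictScalars R) (g := π.restrictScalars R) hle).mpr
      (inf_le_right.trans (map_ideal_smul_top_of_surjective (g := π.restrictScalars R) hπ _).ge)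
  refine ⟨n, hle, injective_mkQ_comp_of_disjoint (f := ι.restrictScalars R) hι
    (disjoint_iff.mpr (by rwa [inf_comm])), hexact.linearMap_ker_eq.symm,
    mapQ_surjective_of_surjective (g := π.restrictScalars R) hπ hle, ?_, ?_⟩
  · exact fun j hj _ => Module.isTorsionBySet_quotient_ideal_smul B (J ^ n) (a := ⟨j, hj⟩)
  · exact fun j hj _ => Module.isTorsionBySet_quotient_ideal_smul C (J ^ n) (a := ⟨j, hj⟩)

/-- Affine version of Proposition 4.6: a short exact sequence of finitely generated
`S`-modules whose first term is annihilated by a power of `J ⊆ R` maps onto a short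
exact sequence `0 → A → B/(JⁿB) → C/(JⁿC) → 0`, whose last two terms are annihilated
by `Jⁿ`. -/
theorem exists_pow_smul_quotient_short_exact
    {R S A B C : Type*} [CommRing R] [IsNoetherianRing R] [Ring S] [Algebra R S]
    [Module.Finite R S]
    [AddCommGroup A] [Module S A] [Module R A] [IsScalarTower R S A] [Module.Finite S A]
    [AddCommGroup B] [Module S B] [Module R B] [IsScalarTower R S B] [Module.Finite S B]
    [AddCommGroup C] [Module S C] [Module R C] [IsScalarTower R S C] [Module.Finite S C]
    (ι : A →ₗ[S] B) (π : B →ₗ[S] C)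
    (hι : Function.Injective ι) (hπ : Function.Surjective π)
    (hex : LinearMap.ker π = LinearMap.range ι)
    (J : Ideal R) (hJ : ∃ k : ℕ, J ^ k • (⊤ : Submodule R A) = ⊥) :
    ∃ n : ℕ, ∃ hle : J ^ n • (⊤ : Submodule R B) ≤
        (J ^ n • (⊤ : Submodule R C)).comap (π.restrictScalars R),
      Function.Injective
          ((J ^ n • (⊤ : Submodule R B)).mkQ.comp (ι.restrictScalars R)) ∧
        LinearMap.range ((J ^ n • (⊤ : Submodule R B)).mkQ.comp (ι.restrictScalars R)) =
          LinearMap.ker (Submodule.mapQ (J ^ n • (⊤ : Submodule R B))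
            (J ^ n • (⊤ : Submodule R C)) (π.restrictScalars R) hle) ∧
        Function.Surjective (Submodule.mapQ (J ^ n • (⊤ : Submodule R B))
          (J ^ n • (⊤ : Submodule R C)) (π.restrictScalars R) hle) ∧
        (∀ j ∈ J ^ n, ∀ x : B ⧸ J ^ n • (⊤ : Submodule R B), j • x = 0) ∧
        (∀ j ∈ J ^ n, ∀ x : C ⧸ J ^ n • (⊤ : Submodule R C), j • x = 0) :=
  exists_pow_smul_quotient_short_exact_general ι π hι hπ hex J hJ
end

section
/- Let (R, m) be a commutative noetherian local ring and A an R-algebra (not necessarily commutative; the image of R is central in A) that is finitely generated as an R-module. Then every simple right A-module has finite length as an R-module (via restriction of scalars along algebraMap R A). -/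
/-!
Since `R` acts centrally, `𝔪 • M` is an `A`-submodule of the simple module `M`. The module `M` is
cyclic over `A`, hence finite over `R`, so `𝔪 • M ≠ M` by Nakayama and therefore `𝔪 • M = 0`.
Thus `M` is a finite-dimensional vector space over `R ⧸ 𝔪`, whose `R`-submodules are its
`R ⧸ 𝔪`-subspaces.
-/

theorem IsSimpleModule.ideal_smul_top_eq_bot_or_eq_top {R S M : Type*} [CommSemiring R] [Ring S]
    [Algebra R S] [AddCommGroup M] [Module S M] [Module R M] [IsScalarTower R S M]
    [IsSimpleModule S M] (I : Ideal R) :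
    (I • ⊤ : Submodule R M) = ⊥ ∨ (I • ⊤ : Submodule R M) = ⊤ := by
  let N : Submodule S M :=
    { (I • ⊤ : Submodule R M) with
      smul_mem' := fun s m hm => by
        refine Submodule.smul_induction_on hm (fun r hr n _ => ?_) (fun _ _ h₁ h₂ => ?_)
        · rw [smul_comm]
          exact Submodule.smul_mem_smul hr Submodule.mem_top
        · rw [smul_add]
          exact Submodule.add_mem _ h₁ h₂ }
  have hN : N.restrictScalars R = I • ⊤ := rfl
  rw [← hN, Submodule.restrictScalars_eq_bot_iff, Submodule.restrictScalars_eq_top_iff]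
  exact eq_bot_or_eq_top N

theorem IsLocalRing.maximalIdeal_smul_top_ne_top {R M : Type*} [CommRing R] [IsLocalRing R]
    [AddCommGroup M] [Module R M] [Module.Finite R M] [Nontrivial M] :
    (maximalIdeal R • ⊤ : Submodule R M) ≠ ⊤ := by
  refine (Submodule.top_ne_ideal_smul_of_le_jacobson_annihilator ?_).symm
  rw [jacobson_eq_maximalIdeal _ ((Module.annihilator_eq_top_iff).not.mpr (not_subsingleton M))]

theorem isFiniteLength_of_smul_top_eq_bot {R M : Type*} [CommRing R] [AddCommGroup M]
    [Module R M] [Module.Finite R M] {m : Ideal R} [m.IsMaximal]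
    (hm : m • (⊤ : Submodule R M) = ⊥) : IsFiniteLength R M := by
  have hM : Module.IsTorsionBySet R M m := by
    rwa [Module.isTorsionBySet_iff_subset_annihilator, SetLike.coe_subset_coe,
      ← Submodule.annihilator_top, Submodule.le_annihilator_iff]
  let := Ideal.Quotient.field m
  let : Module (R ⧸ m) M := hM.module
  have : IsScalarTower R (R ⧸ m) M := hM.isScalarTower
  have : Module.Finite (R ⧸ m) M := .of_restrictScalars_finite R (R ⧸ m) M
  rw [← Module.length_ne_top_iff,
    Module.length_eq_of_surjective (R := R ⧸ m) Ideal.Quotient.mk_surjective,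
    Module.length_ne_top_iff, isFiniteLength_iff_isNoetherian_isArtinian]
  exact ⟨inferInstance, inferInstance⟩

theorem isFiniteLength_base_of_isSimpleModule_general
    {R A M : Type*} [CommRing R] [IsLocalRing R]
    [Ring A] [Algebra R A] [Module.Finite R A]
    [AddCommGroup M] [Module Aᵐᵒᵖ M] [Module R M] [IsScalarTower R Aᵐᵒᵖ M]
    (hM : IsSimpleModule Aᵐᵒᵖ M) :
    IsFiniteLength R M := by
  have : Nontrivial M := IsSimpleModule.nontrivial Aᵐᵒᵖ M
  have : Module.Finite R M := .trans Aᵐᵒᵖ M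
  exact isFiniteLength_of_smul_top_eq_bot <|
    (hM.ideal_smul_top_eq_bot_or_eq_top _).resolve_right IsLocalRing.maximalIdeal_smul_top_ne_top

/-- Key step in Lemma 5.8: every simple right `A`-module over a module-finite algebra
`A` over a noetherian local ring `R` has finite length over `R`. -/
theorem isFiniteLength_base_of_isSimpleModule
    {R A M : Type*} [CommRing R] [IsNoetherianRing R] [IsLocalRing R]
    [Ring A] [Algebra R A] [Module.Finite R A]
    [AddCommGroup M] [Module Aᵐᵒᵖ M] [Module R M] [IsScalarTower R Aᵐᵒᵖ M]
    (hM : IsSimpleModule Aᵐᵒᵖ M) :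
    IsFiniteLength R M :=
  isFiniteLength_base_of_isSimpleModule_general hM
end

section
/- Let f : Y → X be a finite morphism of schemes with X locally noetherian. Then for every closed subset W of the underlying topological space of Y, the topological Krull dimension of the image f(W), equipped with the subspace topology, equals the topological Krull dimension of W. -/
open AlgebraicGeometry Function Order Topology

/-! A finite morphism is closed, hence specializing, and its fibres are discrete, so it identifies
no two distinct points of which one specializes to the other. On a quasi-sober `T0` space the
irreducible closed subsets correspond to the points, ordered by specialization. Restricted to
`W → f(W)`, `f` thus becomes a strictly monotone surjection of posets along which chains lift,
and such a map preserves Krull dimension. -/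

theorem LTSeries.exists_lift {α β : Type*} [Preorder α] [Preorder β] {f : α → β}
    (hlift : ∀ a b, b < f a → ∃ a' < a, f a' = b) (p : LTSeries β) :
    ∀ a, f a = p.last → ∃ q : LTSeries α, q.length = p.length ∧ q.last = a := by
  induction p using RelSeries.inductionOn' with
  | singleton _ => exact fun a _ ↦ ⟨RelSeries.singleton _ a, rfl, rfl⟩
  | snoc p b hb ih =>
    intro a ha
    rw [RelSeries.last_snoc] at ha
    obtain ⟨a', ha'a, ha'⟩ := hlift a p.last (ha ▸ hb)
    obtain ⟨q, hq, hqa'⟩ := ih a' ha'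
    exact ⟨q.snoc a (hqa' ▸ ha'a), by simp [hq], RelSeries.last_snoc ..⟩

theorem Order.krullDim_eq_of_strictMono_of_surjective {α β : Type*} [Preorder α] [Preorder β]
    {f : α → β} (hf : StrictMono f) (hsurj : Surjective f)
    (hlift : ∀ a b, b < f a → ∃ a' < a, f a' = b) : krullDim α = krullDim β := by
  refine le_antisymm (krullDim_le_of_strictMono f hf) (iSup_le fun p ↦ ?_)
  obtain ⟨a, ha⟩ := hsurj p.last
  obtain ⟨q, hq, -⟩ := LTSeries.exists_lift hlift p a ha
  exact hq ▸ q.length_le_krullDim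

section Specialization

variable {X Y : Type*} [TopologicalSpace X] [TopologicalSpace Y]

attribute [local instance] specializationOrder

theorem topologicalKrullDim_eq_krullDim_specializationOrder [QuasiSober X] [T0Space X] :
    topologicalKrullDim X = krullDim X :=
  krullDim_eq_of_orderIso irreducibleSetEquivPoints

theorem SpecializingMap.topologicalKrullDim_eq [QuasiSober X] [T0Space X] [QuasiSober Y]
    [T0Space Y] {f : X → Y} (hf : SpecializingMap f) (hcont : Continuous f)
    (hsurj : Surjective f) (hinj : ∀ ⦃a b⦄, a ⤳ b → f a = f b → a = b) :
    topologicalKrullDim X = topologicalKrullDim Y := by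
  simp only [topologicalKrullDim_eq_krullDim_specializationOrder]
  refine krullDim_eq_of_strictMono_of_surjective (fun a b hab ↦ ?_) hsurj fun a b hb ↦ ?_
  -- in `specializationOrder`, `x ≤ y` means `y ⤳ x`
  · exact (show f a ≤ f b from hab.le.map hcont).lt_of_ne
      fun h ↦ hab.ne (hinj hab.le h.symm).symm
  · obtain ⟨a', haa', rfl⟩ := hf hb.le
    exact ⟨a', lt_of_le_of_ne haa' (by rintro rfl; exact hb.ne rfl), rfl⟩

end Specialization

theorem AlgebraicGeometry.Scheme.Hom.eq_of_specializes_of_eq {X Y : Scheme} (f : Y ⟶ X)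
    [LocallyQuasiFinite f] {a b : Y} (h : a ⤳ b) (he : f a = f b) : a = b := by
  have : DiscreteTopology (f ⁻¹' {f b}) := (f.isDiscrete_preimage_singleton (f b)).to_subtype
  have hab : (⟨a, he⟩ : f ⁻¹' {f b}) ⤳ ⟨b, rfl⟩ :=
    IsInducing.subtypeVal.specializes_iff.mp h
  exact congrArg Subtype.val hab.eq

theorem topologicalKrullDim_image_of_isFinite_general
    {X Y : Scheme} (f : Y ⟶ X) [IsFinite f]
    (W : Set Y) (hW : IsClosed W) :
    topologicalKrullDim (f.base '' W) = topologicalKrullDim W := by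
  let g := (Set.mapsTo_image f W).restrict
  have : QuasiSober W := hW.isClosedEmbedding_subtypeVal.quasiSober
  have : QuasiSober (f '' W) := (f.isClosedMap W hW).isClosedEmbedding_subtypeVal.quasiSober
  have hspec : SpecializingMap g := (f.isClosedMap.mapsToRestrict hW _).specializingMap
  have hsurj : Surjective g := (Set.MapsTo.restrict_surjective_iff _).mpr (Set.surjOn_image f W)
  have hinj : ∀ ⦃a b : W⦄, a ⤳ b → g a = g b → a = b := fun a b hab he ↦
    Subtype.ext <| f.eq_of_specializes_of_eq (hab.map continuous_subtype_val) congr(($he).1)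
  exact (hspec.topologicalKrullDim_eq (f.continuous.restrict _) hsurj hinj).symm

/-- Lemma 4.8(2): for a finite morphism `f : Y → X` with `X` locally noetherian and
`W ⊆ Y` closed, `dim f(W) = dim W`. -/
theorem topologicalKrullDim_image_of_isFinite
    {X Y : Scheme} (f : Y ⟶ X) [IsFinite f] [IsLocallyNoetherian X]
    (W : Set Y) (hW : IsClosed W) :
    topologicalKrullDim (f.base '' W) = topologicalKrullDim W :=
  topologicalKrullDim_image_of_isFinite_general f W hW
end

section
/- Let f : Y → X be a finite morphism of schemes with X locally noetherian. Then for every closed subset Z of the underlying topological space of X that is contained in the set-theoretic image of f, the topological Krull dimension of the preimage f⁻¹(Z), equipped with the subspace topology, equals the topological Krull dimension of Z. -/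
/-!
A finite morphism is closed, hence its restriction `f⁻¹(Z) → Z` is a closed surjection, so
specializations lift along it and every chain of irreducible closed subsets of `Z` lifts to
`f⁻¹(Z)`. Conversely, finite morphisms have discrete fibres, so there are no proper
specializations inside a fibre and chains in `f⁻¹(Z)` map to chains of the same length in `Z`.
Both spaces are sober, so everything can be phrased in the specialization order.
-/

open AlgebraicGeometry

open Topology Order

section Order

variable {α β : Type*} [Preorder α] [Preorder β] {f : α → β}

theorem LTSeries.exists_lift_of_exists_le (hf : Monotone f)
    (hlift : ∀ a b, b ≤ f a → ∃ a' ≤ a, f a' = b)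
    (p : LTSeries β) (a : α) (ha : f a = p.last) :
    ∃ q : LTSeries α, q.length = p.length ∧ q.last = a := by
  induction p using RelSeries.inductionOn' generalizing a with
  | singleton b => exact ⟨RelSeries.singleton _ a, rfl, rfl⟩
  | snoc p b hb ih =>
    rw [RelSeries.last_snoc] at ha
    obtain ⟨a', ha'a, ha'⟩ := hlift a p.last (ha ▸ hb.le)
    have ha'a : a' < a := ha'a.lt_of_not_ge fun haa' ↦ (ha ▸ ha' ▸ hb).not_ge (hf haa')
    obtain ⟨q, hlen, hlast⟩ := ih a' ha'
    exact ⟨q.snoc a (hlast ▸ ha'a), by simp [hlen], RelSeries.last_snoc _ _ _⟩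

theorem Order.krullDim_le_of_surjective_of_exists_le (hf : Monotone f)
    (hsurj : Function.Surjective f) (hlift : ∀ a b, b ≤ f a → ∃ a' ≤ a, f a' = b) :
    krullDim β ≤ krullDim α := by
  refine iSup_le fun p ↦ ?_
  obtain ⟨a, ha⟩ := hsurj p.last
  obtain ⟨q, hq, -⟩ := p.exists_lift_of_exists_le hf hlift a ha
  exact hq ▸ LTSeries.length_le_krullDim q

end Order

section Topology

variable {A B : Type*} [TopologicalSpace A] [TopologicalSpace B]
  [QuasiSober A] [T0Space A] [QuasiSober B] [T0Space B] {g : A → B}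

theorem topologicalKrullDim_eq_krullDim_specialization :
    topologicalKrullDim A = krullDim (Specialization A) :=
  krullDim_eq_of_orderIso irreducibleSetEquivPoints

theorem topologicalKrullDim_le_of_eq_of_specializes (hg : Continuous g)
    (hfib : ∀ a a', a ⤳ a' → g a = g a' → a = a') :
    topologicalKrullDim A ≤ topologicalKrullDim B := by
  rw [topologicalKrullDim_eq_krullDim_specialization,
    topologicalKrullDim_eq_krullDim_specialization]
  refine krullDim_le_of_strictMono (Specialization.map ⟨g, hg⟩) fun a b hab ↦ ?_
  exact ((Specialization.map ⟨g, hg⟩).monotone hab.le).lt_of_ne fun h ↦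
    hab.ne (hfib b a hab.le h.symm).symm

theorem topologicalKrullDim_le_of_surjective_of_specializingMap (hg : Continuous g)
    (hsurj : Function.Surjective g) (hspec : SpecializingMap g) :
    topologicalKrullDim B ≤ topologicalKrullDim A := by
  rw [topologicalKrullDim_eq_krullDim_specialization,
    topologicalKrullDim_eq_krullDim_specialization]
  exact krullDim_le_of_surjective_of_exists_le (Specialization.map ⟨g, hg⟩).monotone hsurj
    fun _ _ h ↦ hspec h

theorem topologicalKrullDim_eq_of_surjective_of_isClosedMap (hg : Continuous g)
    (hcl : IsClosedMap g) (hsurj : Function.Surjective g)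
    (hfib : ∀ a a', a ⤳ a' → g a = g a' → a = a') :
    topologicalKrullDim A = topologicalKrullDim B :=
  (topologicalKrullDim_le_of_eq_of_specializes hg hfib).antisymm
    (topologicalKrullDim_le_of_surjective_of_specializingMap hg hsurj hcl.specializingMap)

end Topology

theorem AlgebraicGeometry.Scheme.Hom.eq_of_specializes {X Y : Scheme} (f : Y ⟶ X)
    [LocallyQuasiFinite f] {y y' : Y} (h : y ⤳ y') (he : f.base y = f.base y') : y = y' :=
  (f.isDiscrete_preimage_singleton (f.base y')).eq_of_specializes h he rfl

theorem topologicalKrullDim_preimage_of_isFinite_general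
    {X Y : Scheme} (f : Y ⟶ X) [IsFinite f]
    (Z : Set X) (hZ : IsClosed Z) (hZr : Z ⊆ Set.range f.base) :
    topologicalKrullDim (f.base ⁻¹' Z) = topologicalKrullDim Z := by
  have : QuasiSober (f.base ⁻¹' Z) :=
    (hZ.preimage f.continuous).isClosedEmbedding_subtypeVal.quasiSober
  have : QuasiSober Z := hZ.isClosedEmbedding_subtypeVal.quasiSober
  refine topologicalKrullDim_eq_of_surjective_of_isClosedMap f.continuous.restrictPreimage
    (f.isClosedMap.restrictPreimage Z) ?_ fun a a' h he ↦ ?_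
  · rintro ⟨z, hz⟩
    obtain ⟨y, rfl⟩ := hZr hz
    exact ⟨⟨y, hz⟩, rfl⟩
  · exact Subtype.ext <| f.eq_of_specializes (h.map continuous_subtype_val) (congrArg Subtype.val he)

/-- Lemma 4.8(2): for a finite morphism `f : Y → X` with `X` locally noetherian and
`Z ⊆ im(f)` closed, `dim f⁻¹(Z) = dim Z`. -/
theorem topologicalKrullDim_preimage_of_isFinite
    {X Y : Scheme} (f : Y ⟶ X) [IsFinite f] [IsLocallyNoetherian X]
    (Z : Set X) (hZ : IsClosed Z) (hZr : Z ⊆ Set.range f.base) :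
    topologicalKrullDim (f.base ⁻¹' Z) = topologicalKrullDim Z :=
  topologicalKrullDim_preimage_of_isFinite_general f Z hZ hZr
end

section
/- Let R be a commutative ring, P a finite set of prime ideals of R, and let S = {r ∈ R : r ∉ p for every p ∈ P}, which is a multiplicatively closed subset (submonoid) of R. Then for any R-module M, the localization S⁻¹M is the zero module if and only if the localization M_p is the zero module for every p ∈ P. -/
/-!
If `M_p = 0` for every `p ∈ P`, then for each `m : M` the annihilator of `m` lies in no `p ∈ P`,
so by prime avoidance it contains an element outside `⋃ P`, i.e. an element of `S` killing `m`.
The converse holds because `S ⊆ R \ p` for every `p ∈ P`.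
-/

theorem Ideal.exists_mem_forall_notMem_of_forall_not_le {R ι : Type*} [CommRing R]
    {s : Finset ι} {f : ι → Ideal R} (hf : ∀ i ∈ s, (f i).IsPrime) {I : Ideal R}
    (hI : ∀ i ∈ s, ¬I ≤ f i) : ∃ r ∈ I, ∀ i ∈ s, r ∉ f i := by
  rcases s.eq_empty_or_nonempty with rfl | ⟨a, -⟩
  · exact ⟨0, I.zero_mem, by simp⟩
  have hnot : ¬(I : Set R) ⊆ ⋃ i ∈ (s : Set ι), f i := by
    rw [Ideal.subset_union_prime a a fun i hi _ _ => hf i hi]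
    exact fun ⟨i, hi, hle⟩ => hI i hi hle
  obtain ⟨r, hrI, hr⟩ := Set.not_subset.1 hnot
  exact ⟨r, hrI, fun i hi hri => hr (Set.mem_biUnion hi hri)⟩

theorem LocalizedModule.subsingleton_of_le {R M : Type*} [CommRing R] [AddCommGroup M]
    [Module R M] {S T : Submonoid R} (hST : S ≤ T) (h : Subsingleton (LocalizedModule S M)) :
    Subsingleton (LocalizedModule T M) :=
  subsingleton_iff.2 fun m =>
    let ⟨r, hr, hrm⟩ := subsingleton_iff.1 h m
    ⟨r, hST hr, hrm⟩

/-- Key computation in Proposition 4.13: for a finite set `P` of primes of `R` and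
`S = R \ ⋃ P`, one has `S⁻¹M = 0` iff `M_p = 0` for all `p ∈ P`. -/
theorem localizedModule_subsingleton_iff_forall_prime
    {R : Type*} [CommRing R] (P : Finset (PrimeSpectrum R))
    (S : Submonoid R) (hS : ∀ r : R, r ∈ S ↔ ∀ p ∈ P, r ∉ p.asIdeal)
    (M : Type*) [AddCommGroup M] [Module R M] :
    Subsingleton (LocalizedModule S M) ↔
      ∀ p ∈ P, Subsingleton (LocalizedModule p.asIdeal.primeCompl M) := by
  refine ⟨fun h p hp => LocalizedModule.subsingleton_of_le (fun r hr => (hS r).1 hr p hp) h,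
    fun h => LocalizedModule.subsingleton_iff.2 fun m => ?_⟩
  have hm : ∀ p ∈ P, ¬(R ∙ m).annihilator ≤ p.asIdeal := fun p hp hle =>
    Module.notMem_support_iff.2 (h p hp) (Module.mem_support_iff_exists_annihilator.2 ⟨m, hle⟩)
  obtain ⟨r, hr, hrP⟩ := Ideal.exists_mem_forall_notMem_of_forall_not_le (fun p _ => p.isPrime) hm
  exact ⟨r, (hS r).2 hrP, (Submodule.mem_annihilator_span_singleton m r).1 hr⟩
end
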